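/- For the Büchi automaton of the alternating pick-and-drop specification, every accepted infinite word alternates between pickup and drop events: between any two consecutive occurrences of p1 there is exactly one occurrence of p2, and vice versa, and both p1 and p2 occur infinitely often. -/
import Mathlib


/-- States of the Büchi automaton for the alternating pick-and-drop
specification. -/
inductive PDState : Type
  | q0 | q1 | q2 | q3
deriving DecidableEq

open PDState

/-- Transition relation; a letter is a pair of Booleans `(p1, p2)`. -/
inductive PDStep : PDState → (Bool × Bool) → PDState → Prop
  | q0_loop : PDStep q0 (false, false) q0
  | q0_p1 : PDStep q0 (true, false) q1
  | q0_p2 : PDStep q0 (false, true) q2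
  | q2_loop : PDStep q2 (false, false) q2
  | q2_p1 : PDStep q2 (true, false) q1
  | q1_loop : PDStep q1 (false, false) q1
  | q1_p2 : PDStep q1 (false, true) q3
  | q3_none : PDStep q3 (false, false) q2
  | q3_p1 : PDStep q3 (true, false) q1

section Helpers

lemma PDStep.case_p1 {s t : PDState} {l : Bool × Bool} (h : PDStep s l t)
    (hl : l.1 = true) : t = PDState.q1 ∧ s ≠ PDState.q1 := by
  cases h <;> simp_all

lemma PDStep.case_p2 {s t : PDState} {l : Bool × Bool} (h : PDStep s l t)
    (hl : l.2 = true) :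
    (s = PDState.q1 ∧ t = PDState.q3) ∨ (s = PDState.q0 ∧ t = PDState.q2) := by
  cases h <;> simp_all

lemma PDStep.into_q3 {s t : PDState} {l : Bool × Bool} (h : PDStep s l t)
    (ht : t = PDState.q3) : l.2 = true ∧ s = PDState.q1 := by
  cases h <;> simp_all

lemma PDStep.from_q1 {s t : PDState} {l : Bool × Bool} (h : PDStep s l t)
    (hs : s = PDState.q1) : t = PDState.q1 ∨ l.2 = true := by
  cases h <;> simp_all

lemma PDStep.into_q1 {s t : PDState} {l : Bool × Bool} (h : PDStep s l t)
    (ht : t = PDState.q1) : l.1 = true ∨ s = PDState.q1 := by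
  cases h <;> simp_all

lemma PDStep.into_q0 {s t : PDState} {l : Bool × Bool} (h : PDStep s l t)
    (ht : t = PDState.q0) : s = PDState.q0 := by
  cases h <;> simp_all

lemma PDStep.blank23 {s t : PDState} {l : Bool × Bool} (h : PDStep s l t)
    (hs : s = PDState.q2 ∨ s = PDState.q3) (hl : l.1 ≠ true) :
    t = PDState.q2 ∨ t = PDState.q3 := by
  cases h <;> simp_all

variable {w : ℕ → Bool × Bool} {r : ℕ → PDState}

lemma pd_L3 (hstep : ∀ i, PDStep (r i) (w i) (r (i + 1))) (i : ℕ)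
    (h : (w i).1 = true) : r (i + 1) = q1 ∧ r i ≠ q1 :=
  (hstep i).case_p1 h

lemma pd_L4 (hstep : ∀ i, PDStep (r i) (w i) (r (i + 1))) (i : ℕ)
    (h : (w i).2 = true) :
    (r i = q1 ∧ r (i + 1) = q3) ∨ (r i = q0 ∧ r (i + 1) = q2) :=
  (hstep i).case_p2 h

lemma pd_L5 (hstep : ∀ i, PDStep (r i) (w i) (r (i + 1))) (i : ℕ)
    (h : r (i + 1) = q3) : (w i).2 = true ∧ r i = q1 :=
  (hstep i).into_q3 h

lemma pd_L2 (hstep : ∀ i, PDStep (r i) (w i) (r (i + 1))) (i : ℕ)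
    (h : r i = q1) : r (i + 1) = q1 ∨ (w i).2 = true :=
  (hstep i).from_q1 h

lemma pd_L1 (hstep : ∀ i, PDStep (r i) (w i) (r (i + 1))) (i : ℕ)
    (h : r (i + 1) = q1) : (w i).1 = true ∨ r i = q1 :=
  (hstep i).into_q1 h

lemma pd_q0_back (hstep : ∀ i, PDStep (r i) (w i) (r (i + 1))) (i : ℕ)
    (h : r (i + 1) = q0) : r i = q0 :=
  (hstep i).into_q0 h

lemma pd_q0_back' (hstep : ∀ i, PDStep (r i) (w i) (r (i + 1))) :
    ∀ s t : ℕ, s ≤ t → r t = q0 → r s = q0 := by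
  intro s t
  induction t with
  | zero =>
    intro hst h
    have : s = 0 := by omega
    rw [this]; exact h
  | succ n ih =>
    intro hst h
    rcases Nat.lt_or_ge s (n + 1) with hlt | hge
    · exact ih (by omega) (pd_q0_back hstep n h)
    · have : s = n + 1 := by omega
      rw [this]; exact h

lemma pd_stays_q1 (hstep : ∀ i, PDStep (r i) (w i) (r (i + 1))) :
    ∀ s t : ℕ, s ≤ t → r s = q1 →
    (∀ k, s ≤ k → k < t → (w k).2 ≠ true) → r t = q1 := by
  intro s t
  induction t with
  | zero =>
    intro hst h _
    have : s = 0 := by omega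
    rw [← this]; exact h
  | succ n ih =>
    intro hst h hno
    rcases Nat.lt_or_ge s (n + 1) with hlt | hge
    · have hn : r n = q1 := ih (by omega) h (fun k hk1 hk2 => hno k hk1 (by omega))
      rcases pd_L2 hstep n hn with h' | h'
      · exact h'
      · exact absurd h' (hno n (by omega) (by omega))
    · have : s = n + 1 := by omega
      rw [← this]; exact h

lemma pd_exists_p1 (hstep : ∀ i, PDStep (r i) (w i) (r (i + 1))) :
    ∀ s t : ℕ, s ≤ t → r s ≠ q1 → r t = q1 →
    ∃ k, s ≤ k ∧ k < t ∧ (w k).1 = true := by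
  intro s t
  induction t with
  | zero =>
    intro hst h1 h2
    have : s = 0 := by omega
    exact absurd (this ▸ h2) h1
  | succ n ih =>
    intro hst h1 h2
    have hs : s ≤ n := by
      rcases Nat.lt_or_ge s (n + 1) with h' | h'
      · omega
      · exfalso
        have : s = n + 1 := by omega
        exact h1 (this ▸ h2)
    rcases pd_L1 hstep n h2 with h | h
    · exact ⟨n, hs, by omega, h⟩
    · rcases Nat.eq_or_lt_of_le hs with heq | hlt
      · exact absurd (heq ▸ h) h1
      · obtain ⟨k, hk1, hk2, hk3⟩ := ih hs h1 h
        exact ⟨k, hk1, by omega, hk3⟩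

lemma pd_stays_23 (hstep : ∀ i, PDStep (r i) (w i) (r (i + 1))) :
    ∀ s t : ℕ, s ≤ t → (r s = q2 ∨ r s = q3) →
    (∀ k, s ≤ k → k < t → (w k).1 ≠ true) → (r t = q2 ∨ r t = q3) := by
  intro s t
  induction t with
  | zero =>
    intro hst h _
    have : s = 0 := by omega
    rw [← this]; exact h
  | succ n ih =>
    intro hst h hno
    rcases Nat.lt_or_ge s (n + 1) with hlt | hge
    · have hn := ih (by omega) h (fun k hk1 hk2 => hno k hk1 (by omega))
      exact (hstep n).blank23 hn (hno n (by omega) (by omega))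
    · have : s = n + 1 := by omega
      rw [← this]; exact h

end Helpers

/-- In every word accepted by the pick-and-drop Büchi automaton (some run from
`q0` visits `q3` infinitely often), pickups (`p1`) and drops (`p2`) each occur
infinitely often, and they strictly alternate: between any two consecutive
occurrences of `p1` there is exactly one occurrence of `p2`, and vice versa. -/
theorem pick_drop_accepted_words_alternate
    (w : ℕ → Bool × Bool) (r : ℕ → PDState)
    (hr0 : r 0 = q0)
    (hstep : ∀ i, PDStep (r i) (w i) (r (i + 1)))
    (hacc : {i : ℕ | r i = q3}.Infinite) :
    {i : ℕ | (w i).1 = true}.Infinite ∧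
    {i : ℕ | (w i).2 = true}.Infinite ∧
    (∀ i j : ℕ, i < j → (w i).1 = true → (w j).1 = true →
      (∀ k, i < k → k < j → (w k).1 ≠ true) →
      ∃! k, i < k ∧ k < j ∧ (w k).2 = true) ∧
    (∀ i j : ℕ, i < j → (w i).2 = true → (w j).2 = true →
      (∀ k, i < k → k < j → (w k).2 ≠ true) →
      ∃! k, i < k ∧ k < j ∧ (w k).1 = true) := by
  refine ⟨?_, ?_, ?_, ?_⟩
  · -- p1 infinitely often
    apply Set.infinite_of_not_bddAbove
    rw [not_bddAbove_iff]
    intro n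
    obtain ⟨m, hm, hmn⟩ := hacc.exists_gt n
    obtain ⟨m', hm', hmm'⟩ := hacc.exists_gt m
    have hm'pos : m' ≥ 1 := by omega
    obtain ⟨hp2, hq1⟩ := pd_L5 hstep (m' - 1) (by
      have : m' - 1 + 1 = m' := by omega
      rw [this]; exact hm')
    have hmne : r m ≠ q1 := by rw [hm]; intro h; cases h
    have hle : m ≤ m' - 1 := by
      rcases Nat.lt_or_ge m (m' - 1) with h | h
      · omega
      · have : m = m' - 1 := by omega
        rw [this] at hm
        rw [hm] at hq1; cases hq1
    obtain ⟨k, hk1, hk2, hk3⟩ := pd_exists_p1 hstep m (m' - 1) hle hmne hq1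
    exact ⟨k, hk3, by omega⟩
  · -- p2 infinitely often
    apply Set.infinite_of_not_bddAbove
    rw [not_bddAbove_iff]
    intro n
    obtain ⟨m, hm, hmn⟩ := hacc.exists_gt (n + 1)
    have : m - 1 + 1 = m := by omega
    obtain ⟨hp2, _⟩ := pd_L5 hstep (m - 1) (by rw [this]; exact hm)
    exact ⟨m - 1, hp2, by omega⟩
  · -- exactly one p2 between consecutive p1's
    intro i j hij hi hj hno
    obtain ⟨hi1, _⟩ := pd_L3 hstep i hi
    obtain ⟨_, hjne⟩ := pd_L3 hstep j hj
    have hex : ∃ k, i < k ∧ k < j ∧ (w k).2 = true := by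
      by_contra hcon
      push_neg at hcon
      have : r j = q1 := pd_stays_q1 hstep (i + 1) j hij hi1
        (fun k hk1 hk2 h => hcon k (by omega) hk2 h)
      exact hjne this
    obtain ⟨k, hk1, hk2, hk3⟩ := hex
    refine ⟨k, ⟨hk1, hk2, hk3⟩, ?_⟩
    rintro k' ⟨hk'1, hk'2, hk'3⟩
    by_contra hne
    -- wlog: show contradiction for a < b both p2 in (i,j)
    have key : ∀ a b : ℕ, i < a → a < b → b < j → (w a).2 = true → (w b).2 = true → False := by
      intro a b hia hab hbj ha hb
      have hane : r a ≠ q0 := by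
        intro h
        have := pd_q0_back' hstep (i + 1) a (by omega) h
        rw [hi1] at this; cases this
      have ha1 : r a = q1 ∧ r (a + 1) = q3 := by
        rcases pd_L4 hstep a ha with h | h
        · exact h
        · exact absurd h.1 hane
      have hb23 : r b = q2 ∨ r b = q3 := pd_stays_23 hstep (a + 1) b (by omega)
        (Or.inr ha1.2) (fun m hm1 hm2 h => hno m (by omega) (by omega) h)
      rcases pd_L4 hstep b hb with h | h
      · rcases hb23 with h' | h' <;> rw [h.1] at h' <;> cases h'
      · rcases hb23 with h' | h' <;> rw [h.1] at h' <;> cases h'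
    rcases Nat.lt_trichotomy k' k with h | h | h
    · exact key k' k hk'1 h hk2 hk'3 hk3
    · exact hne h
    · exact key k k' hk1 h hk'2 hk3 hk'3
  · -- exactly one p1 between consecutive p2's
    intro i j hij hi hj hno
    have hi23 : r (i + 1) = q3 ∨ r (i + 1) = q2 := by
      rcases pd_L4 hstep i hi with h | h
      · exact Or.inl h.2
      · exact Or.inr h.2
    have hjq1 : r j = q1 := by
      rcases pd_L4 hstep j hj with h | h
      · exact h.1
      · exfalso
        have := pd_q0_back' hstep (i + 1) j hij h.1
        rcases hi23 with h' | h' <;> rw [h'] at this <;> cases this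
    have hi1ne : r (i + 1) ≠ q1 := by
      rcases hi23 with h | h <;> rw [h] <;> intro hc <;> cases hc
    have hex : ∃ k, i < k ∧ k < j ∧ (w k).1 = true := by
      obtain ⟨k, hk1, hk2, hk3⟩ := pd_exists_p1 hstep (i + 1) j hij hi1ne hjq1
      exact ⟨k, by omega, hk2, hk3⟩
    obtain ⟨k, hk1, hk2, hk3⟩ := hex
    refine ⟨k, ⟨hk1, hk2, hk3⟩, ?_⟩
    rintro k' ⟨hk'1, hk'2, hk'3⟩
    by_contra hne
    have key : ∀ a b : ℕ, i < a → a < b → b < j → (w a).1 = true → (w b).1 = true → False := by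
      intro a b hia hab hbj ha hb
      have ha1 : r (a + 1) = q1 := (pd_L3 hstep a ha).1
      have hbne : r b ≠ q1 := (pd_L3 hstep b hb).2
      have : r b = q1 := pd_stays_q1 hstep (a + 1) b (by omega) ha1
        (fun m hm1 hm2 h => hno m (by omega) (by omega) h)
      exact hbne this
    rcases Nat.lt_trichotomy k' k with h | h | h
    · exact key k' k hk'1 h hk2 hk'3 hk3
    · exact hne h
    · exact key k k' hk1 h hk'2 hk3 hk'3
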